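/- Let K be a field, ℓ ≥ 1, and r ≥ 2. If u₁,…,u_r are units of the Laurent polynomial ring K[t₁^{±1},…,t_ℓ^{±1}] such that no two of them are proportional over K (i.e., uᵢ ≠ c·uⱼ for all i ≠ j and all c ∈ K), then the sum u₁ + u₂ + ⋯ + u_r is not a unit of K[t₁^{±1},…,t_ℓ^{±1}]. -/

import Mathlib

/-!
`ℤ^ℓ` is a totally ordered group, so if `f` or `g` is not a monomial, at least two distinct
exponents of `f * g` arise from a unique pair of exponents of `f` and `g` (`TwoUniqueSums`);
their coefficients are nonzero products. Hence `f * g = 1` forces `f` to be a monomial.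
Non-proportional monomials have distinct exponents, so the sum of `r ≥ 2` of them has `r`
monomials and is not a unit.
-/

open Finset

namespace Finsupp

theorem card_support_sum_single {α ι M : Type*} [Fintype ι] [AddCommMonoid M]
    {a : ι → α} (ha : Function.Injective a) {c : ι → M} (hc : ∀ i, c i ≠ 0) :
    #(∑ i, single (a i) (c i)).support = Fintype.card ι := by
  classical
  rw [support_sum_eq_biUnion _ fun i j hij => by
      simpa [support_single _ (hc _)] using ha.ne hij,
    card_biUnion fun i _ j _ hij => by
      simpa [support_single _ (hc _)] using ha.ne hij]
  simp [support_single _ (hc _)]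

end Finsupp

namespace AddMonoidAlgebra

variable {R A : Type*} [Semiring R] [NoZeroDivisors R]

theorem one_lt_card_support_mul [Add A] [TwoUniqueSums A] {f g : AddMonoidAlgebra R A}
    (h : 1 < #f.coeff.support * #g.coeff.support) : 1 < #(f * g).coeff.support := by
  obtain ⟨p, hp, q, hq, hpq, hup, huq⟩ := TwoUniqueSums.uniqueAdd_of_one_lt_card h
  rw [mem_product] at hp hq
  have mem_support {x y} (hx : x ∈ f.coeff.support) (hy : y ∈ g.coeff.support)
      (hu : UniqueAdd f.coeff.support g.coeff.support x y) : x + y ∈ (f * g).coeff.support := by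
    rw [Finsupp.mem_support_iff] at hx hy ⊢
    rw [coeff_mul_add_of_uniqueAdd hu]
    exact mul_ne_zero hx hy
  refine one_lt_card.2 ⟨_, mem_support hp.1 hp.2 hup, _, mem_support hq.1 hq.2 huq, fun h => ?_⟩
  obtain ⟨h1, h2⟩ := hup hq.1 hq.2 h.symm
  exact hpq (Prod.ext h1.symm h2.symm)

variable [Nontrivial R] [AddMonoid A] [TwoUniqueSums A]

theorem card_support_eq_one_of_isUnit {f : AddMonoidAlgebra R A} (hf : IsUnit f) :
    #f.coeff.support = 1 := by
  obtain ⟨g, hfg⟩ := hf.exists_right_inv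
  have hg : g ≠ 0 := by rintro rfl; simp at hfg
  have hf_pos : 0 < #f.coeff.support := card_pos.2 (by simpa using hf.ne_zero)
  have hg_pos : 0 < #g.coeff.support := card_pos.2 (by simpa using hg)
  have hprod : #f.coeff.support * #g.coeff.support ≤ 1 := by
    refine not_lt.1 fun h => ?_
    have := one_lt_card_support_mul h
    rw [hfg, one_def, coeff_single, Finsupp.support_single _ one_ne_zero, card_singleton] at this
    exact lt_irrefl 1 this
  nlinarith

theorem exists_eq_single_of_isUnit {f : AddMonoidAlgebra R A} (hf : IsUnit f) :
    ∃ a, ∃ r ≠ 0, f = single a r := by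
  obtain ⟨a, r, hr, hfa⟩ := Finsupp.card_support_eq_one'.1 (card_support_eq_one_of_isUnit hf)
  exact ⟨a, r, hr, coeff_injective hfa⟩

end AddMonoidAlgebra

open AddMonoidAlgebra in
theorem sum_of_nonproportional_units_not_unit_general
    {K : Type*} [Field K] (ℓ r : ℕ) (hr : 2 ≤ r)
    (u : Fin r → AddMonoidAlgebra K (Fin ℓ → ℤ))
    (hu : ∀ i, IsUnit (u i))
    (hprop : ∀ i j, i ≠ j → ∀ c : K, u i ≠ c • u j) :
    ¬ IsUnit (∑ i, u i) := by
  intro hS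
  choose a c hc hu_eq using fun i => exists_eq_single_of_isUnit (hu i)
  have ha : Function.Injective a := fun i j hij => by
    by_contra hne
    refine hprop i j hne (c i / c j) ?_
    rw [hu_eq, hu_eq, smul_single', hij, div_mul_cancel₀ _ (hc j)]
  have hcard := card_support_eq_one_of_isUnit hS
  simp_rw [coeff_sum, hu_eq, coeff_single, Finsupp.card_support_sum_single ha hc,
    Fintype.card_fin] at hcard
  omega

/-- If `u₁,…,u_r` (with `r ≥ 2`) are pairwise non-proportional units of the Laurent
polynomial ring `K[t₁^±1,…,t_ℓ^±1]` (realized as the group algebra of `ℤ^ℓ` over `K`),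
then their sum `u₁ + ⋯ + u_r` is not a unit. -/
theorem sum_of_nonproportional_units_not_unit
    {K : Type*} [Field K] (ℓ r : ℕ) (hℓ : 1 ≤ ℓ) (hr : 2 ≤ r)
    (u : Fin r → AddMonoidAlgebra K (Fin ℓ → ℤ))
    (hu : ∀ i, IsUnit (u i))
    (hprop : ∀ i j, i ≠ j → ∀ c : K, u i ≠ c • u j) :
    ¬ IsUnit (∑ i, u i) :=
  sum_of_nonproportional_units_not_unit_general ℓ r hr u hu hprop
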